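/- Let N be an odd natural number and let a₀,…,a_N : ℝ → ℝ be smooth functions all of whose derivatives have at most polynomial growth. Define G(t) = Σ_{n=0}^{(N−1)/2} a_{2n}^{(2n)}(t) and F(t) = Σ_{n=0}^{(N−1)/2} a_{2n+1}^{(2n)}(t). Let D be the tempered distribution on ℝ² given by D(φ) = Σ_{i=0}^{(N−1)/2−1} [ ∫_ℝ (Σ_{n=0}^{(N−1)/2−1−i} a_{2n+2i+2}^{(2n)}(t)) (∂ₓ^{2i}φ)(t,0) dt − ∫_ℝ (Σ_{n=0}^{(N−1)/2−1−i} a_{2n+2i+3}^{(2n)}(t)) (∂ₓ^{2i+1}φ)(t,0) dt ]. Then for every Schwartz function φ : ℝ² → ℝ, D(−∂ₜ²φ + ∂ₓ²φ) = Σ_{n=0}^{N} ∫_ℝ a_n(t)(−1)ⁿ(∂ₓⁿφ)(t,0) dt − ∫_ℝ G(t)φ(t,0) dt + ∫_ℝ F(t)(∂ₓφ)(t,0) dt. (That is, □D = Σ_{n=0}^N a_nδ⁽ⁿ⁾ − Gδ − Fδ' as distributions.) -/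

import Mathlib

open MeasureTheory SchwartzMap Real

/-- Spatial partial derivative `∂ₓ` on Schwartz functions on `ℝ²` (coordinates `(t, x)`). -/
noncomputable def Dx (φ : SchwartzMap (ℝ × ℝ) ℝ) : SchwartzMap (ℝ × ℝ) ℝ :=
  LineDeriv.lineDerivOpCLM ℝ (SchwartzMap (ℝ × ℝ) ℝ) ((0, 1) : ℝ × ℝ) φ

/-- Temporal partial derivative `∂ₜ` on Schwartz functions on `ℝ²`. -/
noncomputable def Dt (φ : SchwartzMap (ℝ × ℝ) ℝ) : SchwartzMap (ℝ × ℝ) ℝ :=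
  LineDeriv.lineDerivOpCLM ℝ (SchwartzMap (ℝ × ℝ) ℝ) ((1, 0) : ℝ × ℝ) φ

/-- The wave operator `□φ = −∂ₜ²φ + ∂ₓ²φ`. -/
noncomputable def waveOp (φ : SchwartzMap (ℝ × ℝ) ℝ) : SchwartzMap (ℝ × ℝ) ℝ :=
  -(Dt (Dt φ)) + Dx (Dx φ)

/-!
Write `⟨b, ψ⟩ = ∫ b(t) ψ(t, 0) dt`. Two integrations by parts in `t`, together with the
commutation of `∂ₓ` with `□`, give `⟨b, ∂ₓʲ □φ⟩ = -⟨b'', ∂ₓʲ φ⟩ + ⟨b, ∂ₓʲ⁺² φ⟩`.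
For `c k = a (2k)` (resp. `a (2k+1)`), the tails `Sᵢ = Σ_{i ≤ k ≤ M} c_k^{(2(k-i))}` satisfy
`S_{i+1}'' = Sᵢ - cᵢ`, so the sum defining `D (□φ)` telescopes to
`Σₖ ⟨cₖ, ∂ₓ^{2k} φ⟩ - ⟨S₀, φ⟩` (resp. with `∂ₓ^{2k+1}` and `∂ₓφ`), and `S₀` is `G` (resp. `F`).
-/

theorem Finset.sum_range_two_mul {M : Type*} [AddCommMonoid M] (f : ℕ → M) (m : ℕ) :
    ∑ n ∈ range (2 * m), f n = ∑ i ∈ range m, f (2 * i) + ∑ i ∈ range m, f (2 * i + 1) := by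
  induction m with
  | zero => simp
  | succ k ih =>
    rw [show 2 * (k + 1) = 2 * k + 1 + 1 by ring, sum_range_succ, sum_range_succ, ih,
      sum_range_succ, sum_range_succ]
    abel

namespace Function.HasTemperateGrowth

variable {F : Type*} [NormedAddCommGroup F] [NormedSpace ℝ F]

theorem deriv {b : ℝ → F} (hb : b.HasTemperateGrowth) : (deriv b).HasTemperateGrowth := by
  refine ⟨(contDiff_infty_iff_deriv.mp hb.1).2, fun n => ?_⟩
  obtain ⟨k, C, h⟩ := hb.2 (n + 1)
  refine ⟨k, C, fun x => ?_⟩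
  rw [norm_iteratedFDeriv_eq_norm_iteratedDeriv, ← iteratedDeriv_succ',
    ← norm_iteratedFDeriv_eq_norm_iteratedDeriv]
  exact h x

theorem iteratedDeriv {b : ℝ → F} (hb : b.HasTemperateGrowth) (k : ℕ) :
    (iteratedDeriv k b).HasTemperateGrowth := by
  induction k with
  | zero => simpa using hb
  | succ k ih => simpa only [iteratedDeriv_succ] using ih.deriv

theorem integrable_mul {D : Type*} [NormedAddCommGroup D] [NormedSpace ℝ D] [MeasurableSpace D]
    [BorelSpace D] [SecondCountableTopology D] {μ : Measure D} [μ.HasTemperateGrowth]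
    {b : D → ℝ} (hb : b.HasTemperateGrowth) (g : 𝓢(D, ℝ)) :
    Integrable (fun x => b x * g x) μ := by
  simpa [smulLeftCLM_apply hb] using (smulLeftCLM ℝ b g).integrable (μ := μ)

theorem integral_mul_deriv_eq_neg_deriv_mul {b : ℝ → ℝ} (hb : b.HasTemperateGrowth)
    (g : 𝓢(ℝ, ℝ)) : ∫ t, b t * _root_.deriv g t = -∫ t, _root_.deriv b t * g t :=
  integral_mul_deriv_eq_deriv_mul_of_integrable
    (fun t _ => (hb.1.differentiable (by simp) t).hasDerivAt)
    (fun t _ => g.hasDerivAt t) (hb.integrable_mul (derivCLM ℝ ℝ g)) (hb.deriv.integrable_mul g)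
    (hb.integrable_mul g)

end Function.HasTemperateGrowth

open LineDeriv in
theorem SchwartzMap.lineDerivOp_comm {E F : Type*} [NormedAddCommGroup E] [NormedSpace ℝ E]
    [NormedAddCommGroup F] [NormedSpace ℝ F] (φ : 𝓢(E, F)) (v w : E) :
    ∂_{v} (∂_{w} φ) = ∂_{w} (∂_{v} φ) := by
  have second (u u' x : E) : ∂_{u} (∂_{u'} φ) x = fderiv ℝ (fderiv ℝ φ) x u u' := by
    have hfun : ⇑(∂_{u'} φ : 𝓢(E, F)) = fun y => fderiv ℝ φ y u' := rfl
    have hd : DifferentiableAt ℝ (fderiv ℝ φ) x := (fderivCLM ℝ E F φ).differentiableAt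
    rw [lineDerivOp_apply_eq_fderiv, hfun, fderiv_clm_apply hd (differentiableAt_const u')]
    simp
  ext x
  rw [second, second, (φ.smooth 2).contDiffAt.isSymmSndFDerivAt (by simp)]

noncomputable def restrictAxis : 𝓢(ℝ × ℝ, ℝ) →L[ℝ] 𝓢(ℝ, ℝ) :=
  compCLMOfAntilipschitz ℝ (ContinuousLinearMap.inl ℝ ℝ ℝ).hasTemperateGrowth
    (AntilipschitzWith.of_le_mul_dist (K := 1) fun s t => by simp [Prod.dist_eq])

@[simp]
theorem restrictAxis_apply (ψ : 𝓢(ℝ × ℝ, ℝ)) (t : ℝ) : restrictAxis ψ t = ψ (t, 0) := rfl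

theorem deriv_restrictAxis (ψ : 𝓢(ℝ × ℝ, ℝ)) (t : ℝ) :
    deriv (restrictAxis ψ) t = Dt ψ (t, 0) := by
  have h : HasDerivAt (restrictAxis ψ) (fderiv ℝ ψ (t, 0) (1, 0)) t :=
    ((ψ.hasFDerivAt (t, 0)).comp t (ContinuousLinearMap.inl ℝ ℝ ℝ).hasFDerivAt).hasDerivAt
  exact h.deriv

theorem Dx_Dt_comm (φ : 𝓢(ℝ × ℝ, ℝ)) : Dx (Dt φ) = Dt (Dx φ) :=
  SchwartzMap.lineDerivOp_comm φ _ _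

theorem iterate_Dx_waveOp (k : ℕ) (φ : 𝓢(ℝ × ℝ, ℝ)) : Dx^[k] (waveOp φ) = waveOp (Dx^[k] φ) := by
  have hcomm : Function.Commute Dx waveOp := fun ψ => by
    rw [waveOp, waveOp, Dx, map_add, map_neg, ← Dx, ← Dx, Dx_Dt_comm, Dx_Dt_comm]
  exact (hcomm.iterate_left k) φ

noncomputable def axisPairing (b : ℝ → ℝ) (ψ : 𝓢(ℝ × ℝ, ℝ)) : ℝ :=
  ∫ t, b t * ψ (t, 0)

section axisPairing

variable {b c : ℝ → ℝ}

theorem integrable_mul_restrictAxis (hb : b.HasTemperateGrowth) (ψ : 𝓢(ℝ × ℝ, ℝ)) :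
    Integrable fun t => b t * ψ (t, 0) :=
  hb.integrable_mul (restrictAxis ψ)

theorem axisPairing_sub_left (hb : b.HasTemperateGrowth) (hc : c.HasTemperateGrowth)
    (ψ : 𝓢(ℝ × ℝ, ℝ)) :
    axisPairing (fun t => b t - c t) ψ = axisPairing b ψ - axisPairing c ψ := by
  simp only [axisPairing, sub_mul]
  exact integral_sub (integrable_mul_restrictAxis hb ψ) (integrable_mul_restrictAxis hc ψ)

theorem axisPairing_Dt (hb : b.HasTemperateGrowth) (ψ : 𝓢(ℝ × ℝ, ℝ)) :
    axisPairing b (Dt ψ) = -axisPairing (deriv b) ψ := by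
  simpa [axisPairing, deriv_restrictAxis] using
    hb.integral_mul_deriv_eq_neg_deriv_mul (restrictAxis ψ)

theorem axisPairing_waveOp (hb : b.HasTemperateGrowth) (ψ : 𝓢(ℝ × ℝ, ℝ)) :
    axisPairing b (waveOp ψ) = -axisPairing (deriv (deriv b)) ψ + axisPairing b (Dx (Dx ψ)) := by
  have hDtDt : axisPairing b (Dt (Dt ψ)) = axisPairing (deriv (deriv b)) ψ := by
    rw [axisPairing_Dt hb, axisPairing_Dt hb.deriv, neg_neg]
  rw [← hDtDt]
  simp only [axisPairing, waveOp, add_apply, neg_apply, mul_add, mul_neg]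
  rw [integral_add (integrable_mul_restrictAxis hb _).fun_neg (integrable_mul_restrictAxis hb _),
    integral_neg]

end axisPairing

theorem integral_mul_neg_one_pow_mul_eq_axisPairing (b : ℝ → ℝ) (n : ℕ) (ψ : 𝓢(ℝ × ℝ, ℝ)) :
    ∫ t, b t * ((-1 : ℝ) ^ n * ψ (t, 0)) = (-1) ^ n * axisPairing b ψ := by
  simp only [axisPairing, mul_left_comm _ ((-1 : ℝ) ^ n), integral_const_mul]

noncomputable def evenDerivTail (c : ℕ → ℝ → ℝ) (m i : ℕ) (t : ℝ) : ℝ :=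
  ∑ n ∈ Finset.range (m - i), iteratedDeriv (2 * n) (c (n + i)) t

section evenDerivTail

variable {c : ℕ → ℝ → ℝ} {m : ℕ}

theorem hasTemperateGrowth_evenDerivTail (hc : ∀ n < m, (c n).HasTemperateGrowth) (i : ℕ) :
    (evenDerivTail c m i).HasTemperateGrowth :=
  .sum fun n hn => (hc _ (by simp at hn; omega)).iteratedDeriv _

theorem evenDerivTail_self (c : ℕ → ℝ → ℝ) (m : ℕ) :
    evenDerivTail c (m + 1) m = c m := by
  funext t
  simp [evenDerivTail]

theorem deriv_deriv_evenDerivTail (hc : ∀ n < m, (c n).HasTemperateGrowth) {i : ℕ} (hi : i < m) :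
    deriv (deriv (evenDerivTail c m (i + 1))) = fun t => evenDerivTail c m i t - c i t := by
  have hderiv (k : ℕ) :
      deriv (fun t => ∑ n ∈ Finset.range (m - (i + 1)),
          iteratedDeriv (2 * n + k) (c (n + (i + 1))) t)
        = fun t => ∑ n ∈ Finset.range (m - (i + 1)),
            iteratedDeriv (2 * n + k + 1) (c (n + (i + 1))) t := by
    funext t
    rw [deriv_fun_sum fun n hn =>
      (((hc _ (by simp at hn; omega)).iteratedDeriv _).1.differentiable (by simp)).differentiableAt]
    simp only [iteratedDeriv_succ]
  funext t
  rw [show evenDerivTail c m (i + 1) = fun t => ∑ n ∈ Finset.range (m - (i + 1)),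
    iteratedDeriv (2 * n + 0) (c (n + (i + 1))) t from rfl, hderiv 0, hderiv 1]
  rw [evenDerivTail, show m - i = m - (i + 1) + 1 by omega, Finset.sum_range_succ']
  simp [mul_add, add_assoc, add_comm 1]

theorem sum_axisPairing_evenDerivTail_waveOp (hc : ∀ n < m + 1, (c n).HasTemperateGrowth)
    (r : ℕ) (φ : 𝓢(ℝ × ℝ, ℝ)) :
    ∑ i ∈ Finset.range m, axisPairing (evenDerivTail c (m + 1) (i + 1)) (Dx^[2 * i + r] (waveOp φ))
      = ∑ i ∈ Finset.range (m + 1), axisPairing (c i) (Dx^[2 * i + r] φ)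
        - axisPairing (evenDerivTail c (m + 1) 0) (Dx^[r] φ) := by
  set Q : ℕ → ℝ := fun i => axisPairing (evenDerivTail c (m + 1) i) (Dx^[2 * i + r] φ) with hQ
  have hstep : ∀ i ∈ Finset.range m,
      axisPairing (evenDerivTail c (m + 1) (i + 1)) (Dx^[2 * i + r] (waveOp φ))
        = (Q (i + 1) - Q i) + axisPairing (c i) (Dx^[2 * i + r] φ) := by
    intro i hi
    replace hi : i < m := Finset.mem_range.mp hi
    have hDxDx : Dx (Dx (Dx^[2 * i + r] φ)) = Dx^[2 * (i + 1) + r] φ := by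
      rw [show 2 * (i + 1) + r = 2 * i + r + 1 + 1 by ring, Function.iterate_succ_apply',
        Function.iterate_succ_apply']
    rw [iterate_Dx_waveOp, axisPairing_waveOp (hasTemperateGrowth_evenDerivTail hc _),
      deriv_deriv_evenDerivTail hc (by omega),
      axisPairing_sub_left (hasTemperateGrowth_evenDerivTail hc _) (hc i (by omega)), hDxDx]
    ring
  rw [Finset.sum_congr rfl hstep, Finset.sum_add_distrib, Finset.sum_range_sub,
    Finset.sum_range_succ _ m]
  simp only [hQ, evenDerivTail_self, mul_zero, zero_add]
  ring

end evenDerivTail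

/-- The correction distribution `D` of Theorem 1 satisfies
`□D = Σ_{n=0}^N aₙ δ⁽ⁿ⁾ − G δ − F δ'` weakly. -/
theorem wave_of_correction_distribution (N : ℕ) (hN : Odd N) (a : ℕ → ℝ → ℝ)
    (ha : ∀ n ≤ N, Function.HasTemperateGrowth (a n))
    (G F : ℝ → ℝ)
    (hG : G = fun t => ∑ n ∈ Finset.range ((N - 1) / 2 + 1),
      iteratedDeriv (2 * n) (a (2 * n)) t)
    (hF : F = fun t => ∑ n ∈ Finset.range ((N - 1) / 2 + 1),
      iteratedDeriv (2 * n) (a (2 * n + 1)) t)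
    (D : SchwartzMap (ℝ × ℝ) ℝ → ℝ)
    (hD : D = fun φ => ∑ i ∈ Finset.range ((N - 1) / 2),
      ((∫ t : ℝ, (∑ n ∈ Finset.range ((N - 1) / 2 - i),
          iteratedDeriv (2 * n) (a (2 * n + 2 * i + 2)) t) * (Dx^[2 * i] φ) (t, 0))
        - ∫ t : ℝ, (∑ n ∈ Finset.range ((N - 1) / 2 - i),
          iteratedDeriv (2 * n) (a (2 * n + 2 * i + 3)) t) * (Dx^[2 * i + 1] φ) (t, 0))) :
    ∀ φ : SchwartzMap (ℝ × ℝ) ℝ,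
      D (waveOp φ) = (∑ n ∈ Finset.range (N + 1),
          ∫ t : ℝ, a n t * ((-1 : ℝ) ^ n * (Dx^[n] φ) (t, 0)))
        - (∫ t : ℝ, G t * φ (t, 0)) + ∫ t : ℝ, F t * (Dx φ) (t, 0) := by
  obtain ⟨M, rfl⟩ := hN
  subst hG hF hD
  intro φ
  have hM : (2 * M + 1 - 1) / 2 = M := by omega
  have heven := sum_axisPairing_evenDerivTail_waveOp (c := fun k => a (2 * k)) (m := M)
    (fun n hn => ha _ (by omega)) 0 φ
  have hodd := sum_axisPairing_evenDerivTail_waveOp (c := fun k => a (2 * k + 1)) (m := M)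
    (fun n hn => ha _ (by omega)) 1 φ
  have hTailEven (i : ℕ) :
      (fun t => ∑ n ∈ Finset.range (M - i), iteratedDeriv (2 * n) (a (2 * n + 2 * i + 2)) t) =
        evenDerivTail (fun k => a (2 * k)) (M + 1) (i + 1) := by
    funext t
    exact Finset.sum_congr (by simp) fun n _ => by ring_nf
  have hTailOdd (i : ℕ) :
      (fun t => ∑ n ∈ Finset.range (M - i), iteratedDeriv (2 * n) (a (2 * n + 2 * i + 3)) t) =
        evenDerivTail (fun k => a (2 * k + 1)) (M + 1) (i + 1) := by
    funext t
    exact Finset.sum_congr (by simp) fun n _ => by ring_nf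
  simp only [← axisPairing.eq_1, hM, hTailEven, hTailOdd,
    show 2 * M + 1 + 1 = 2 * (M + 1) by ring, Finset.sum_sub_distrib, Finset.sum_range_two_mul,
    integral_mul_neg_one_pow_mul_eq_axisPairing]
  have hTailG : evenDerivTail (fun k => a (2 * k)) (M + 1) 0
      = fun t => ∑ n ∈ Finset.range (M + 1), iteratedDeriv (2 * n) (a (2 * n)) t := rfl
  have hTailF : evenDerivTail (fun k => a (2 * k + 1)) (M + 1) 0
      = fun t => ∑ n ∈ Finset.range (M + 1), iteratedDeriv (2 * n) (a (2 * n + 1)) t := rfl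
  simp only [add_zero, hTailG, hTailF, Function.iterate_zero_apply, Function.iterate_one]
    at heven hodd
  simp only [(even_two_mul _).neg_one_pow, (odd_two_mul_add_one _).neg_one_pow, one_mul,
    neg_one_mul, Finset.sum_neg_distrib]
  rw [heven, hodd]
  ring
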